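/- arXiv:2001.07185 — 3 statements merged into one kernel-verified Lean document; each statement's English description precedes it below -/
import Mathlib

section
/- Let c^{m} ∈ ℝ^{s_m} have pairwise distinct entries with Lagrange basis polynomials L_j, and let A^{m,m} ∈ ℝ^{s_m × s_m} satisfy the stage-order condition C(η): ∑_{j} A^{m,m}_{n,j} (c^{m}_j)^{k−1} = (c^{m}_n)^k / k for all n and all 1 ≤ k ≤ η. Let c^{l} ∈ ℝ^{s_l} and define A = L(c^{l}) A^{m,m} with L(c^{l})_{i,j} = L_j(c^{l}_i). Then ∑_{j=1}^{s_m} A_{i,j} (c^{m}_j)^{k−1} = (c^{l}_i)^k / k for all i and all 1 ≤ k ≤ min{η, s_m − 1}. -/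
/-! `C(η)` says that `A^{m,m}` maps the node values of `t^{k-1}` to those of `t^k / k`; since
`k ≤ s_m - 1`, the latter polynomial is reproduced exactly by the interpolation matrix `L(c^l)`,
which turns its values at `c^m` into its values at `c^l`. -/

open Matrix

noncomputable def lagrangeBasis {s : ℕ} (c : Fin s → ℝ) (j : Fin s) (t : ℝ) : ℝ :=
  ∏ k ∈ Finset.univ.erase j, (t - c k) / (c j - c k)

open Polynomial

lemma lagrangeBasis_eq_eval_basis {s : ℕ} (c : Fin s → ℝ) (j : Fin s) (t : ℝ) :
    lagrangeBasis c j t = (Lagrange.basis Finset.univ c j).eval t := by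
  rw [lagrangeBasis, Lagrange.basis, eval_prod]
  refine Finset.prod_congr rfl fun k _ => ?_
  simp [Lagrange.basisDivisor, div_eq_inv_mul, mul_comm]

lemma sum_lagrangeBasis_mul_eval {s : ℕ} {c : Fin s → ℝ} (hc : Function.Injective c)
    {p : ℝ[X]} (hp : p.degree < s) (t : ℝ) :
    ∑ j, lagrangeBasis c j t * p.eval (c j) = p.eval t := by
  conv_rhs =>
    rw [Lagrange.eq_interpolate (s := Finset.univ) (f := p) hc.injOn (by simpa using hp)]
  simp only [Lagrange.interpolate_apply, eval_finsetSum, eval_mul, eval_C,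
    lagrangeBasis_eq_eval_basis, mul_comm]

lemma lagrangeMatrix_mulVec_eval {s r : ℕ} {c : Fin s → ℝ} (hc : Function.Injective c)
    (x : Fin r → ℝ) {p : ℝ[X]} (hp : p.degree < s) :
    (Matrix.of fun i j => lagrangeBasis c j (x i)) *ᵥ (fun j => p.eval (c j)) =
      fun i => p.eval (x i) :=
  funext fun i => sum_lagrangeBasis_mul_eval hc hp (x i)

/-- The interpolation transfer matrix inherits the stage-order condition
`C` up to `min{η, s_m − 1}` from the diagonal method. -/
theorem interpolation_transfer_stage_order (sm sl : ℕ) (η : ℕ)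
    (cm : Fin sm → ℝ) (hcm : Function.Injective cm)
    (Amm : Matrix (Fin sm) (Fin sm) ℝ)
    (hC : ∀ (n : Fin sm) (k : ℕ), 1 ≤ k → k ≤ η →
      ∑ j, Amm n j * (cm j) ^ (k - 1) = (cm n) ^ k / (k : ℝ))
    (cl : Fin sl → ℝ)
    (A : Matrix (Fin sl) (Fin sm) ℝ)
    (hA : A = (Matrix.of fun i j => lagrangeBasis cm j (cl i)) * Amm) :
    ∀ (i : Fin sl) (k : ℕ), 1 ≤ k → k ≤ min η (sm - 1) →
      ∑ j, A i j * (cm j) ^ (k - 1) = (cl i) ^ k / (k : ℝ) := by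
  intro i k hk1 hk
  obtain ⟨hkη, hksm⟩ := le_min_iff.mp hk
  set p : ℝ[X] := C (k : ℝ)⁻¹ * X ^ k
  have hp : p.degree < sm :=
    (degree_C_mul_X_pow_le k _).trans_lt (by exact_mod_cast (by omega : k < sm))
  have hAmm : Amm *ᵥ (fun j => cm j ^ (k - 1)) = fun n => p.eval (cm n) := by
    ext n
    simp only [p, eval_mul, eval_C, eval_pow, eval_X, inv_mul_eq_div]
    exact hC n k hk1 hkη
  calc ∑ j, A i j * cm j ^ (k - 1) = (A *ᵥ fun j => cm j ^ (k - 1)) i := rfl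
    _ = p.eval (cl i) := by
      rw [hA, ← mulVec_mulVec, hAmm, lagrangeMatrix_mulVec_eval hcm cl hp]
    _ = cl i ^ k / k := by simp only [p, eval_mul, eval_C, eval_pow, eval_X, inv_mul_eq_div]
end

section
/- Let b ∈ ℝ^s with all b_i ≠ 0, B = diag(b), and A ∈ ℝ^{s×s} with Â = (𝟙_{s×s} − B⁻¹Aᵀ)B. Suppose A satisfies D(ζ): ∑_i b_i c_i^{k−1} A_{i,j} = (b_j/k)(1 − c_j^k) for all j and 1 ≤ k ≤ ζ, and B(ζ): ∑_i b_i c_i^{k−1} = 1/k for 1 ≤ k ≤ ζ. Then Â satisfies C(ζ): ∑_j Â_{i,j} c_j^{k−1} = c_i^k / k for all i and 1 ≤ k ≤ ζ. -/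
/-!
Entrywise `Âᵢⱼ = bⱼ - bⱼ Aⱼᵢ / bᵢ`, so `∑ⱼ Âᵢⱼ cⱼ^(k-1)` is the quadrature sum `∑ⱼ bⱼ cⱼ^(k-1) = 1/k`
minus `1/bᵢ` times the `D(ζ)` sum `(bᵢ/k)(1 - cᵢ^k)`, which leaves `cᵢ^k / k`.
-/

open Matrix

variable {ι K : Type*} [Fintype ι] [DecidableEq ι] [Field K]

/-- Here `of fun _ _ => 1` is the all-ones matrix `𝟙`, not the identity. -/
noncomputable def symplecticConj (b : ι → K) (A : Matrix ι ι K) : Matrix ι ι K :=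
  ((of fun _ _ => (1 : K)) - (diagonal b)⁻¹ * Aᵀ) * diagonal b

theorem symplecticConj_apply {b : ι → K} (hb : ∀ i, b i ≠ 0) (A : Matrix ι ι K) (i j : ι) :
    symplecticConj b A i j = b j - (b i)⁻¹ * (b j * A j i) := by
  have hinv : (diagonal b)⁻¹ = diagonal fun i => (b i)⁻¹ :=
    inv_eq_right_inv <| by simp [diagonal_mul_diagonal, hb]
  simp only [symplecticConj, hinv, Matrix.sub_apply, mul_diagonal, diagonal_mul, of_apply,
    transpose_apply]
  ring

theorem sum_symplecticConj_mul {b : ι → K} (hb : ∀ i, b i ≠ 0) (A : Matrix ι ι K)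
    (v : ι → K) (i : ι) :
    ∑ j, symplecticConj b A i j * v j =
      ∑ j, b j * v j - (b i)⁻¹ * ∑ j, b j * v j * A j i := by
  simp only [symplecticConj_apply hb, Finset.mul_sum, ← Finset.sum_sub_distrib]
  exact Finset.sum_congr rfl fun j _ => by ring

/-- The symplectic conjugate of a method satisfying `D(ζ)` (together with
quadrature order `ζ`) satisfies the stage-order condition `C(ζ)`. -/
theorem conjugate_D_implies_C (s ζ : ℕ)
    (b c : Fin s → ℝ) (hb : ∀ i, b i ≠ 0)
    (A Ahat : Matrix (Fin s) (Fin s) ℝ)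
    (hAhat : Ahat =
      ((Matrix.of fun _ _ => (1 : ℝ)) - (Matrix.diagonal b)⁻¹ * Aᵀ) * Matrix.diagonal b)
    (hD : ∀ (j : Fin s) (k : ℕ), 1 ≤ k → k ≤ ζ →
      ∑ i, b i * (c i) ^ (k - 1) * A i j = b j / (k : ℝ) * (1 - (c j) ^ k))
    (hB : ∀ k : ℕ, 1 ≤ k → k ≤ ζ → ∑ i, b i * (c i) ^ (k - 1) = 1 / (k : ℝ)) :
    ∀ (i : Fin s) (k : ℕ), 1 ≤ k → k ≤ ζ →
      ∑ j, Ahat i j * (c j) ^ (k - 1) = (c i) ^ k / (k : ℝ) := by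
  intro i k hk1 hkζ
  have hk : (k : ℝ) ≠ 0 := by positivity
  change Ahat = symplecticConj b A at hAhat
  rw [hAhat, sum_symplecticConj_mul hb A (fun j => c j ^ (k - 1)), hB k hk1 hkζ, hD i k hk1 hkζ]
  field_simp [hb i]
  ring
end

section
/- Let b ∈ ℝ^s with all b_i ≠ 0, B = diag(b), c ∈ ℝ^s, and A ∈ ℝ^{s×s} with Â = (𝟙 − B⁻¹Aᵀ)B. Suppose A satisfies C(η): ∑_j A_{i,j} c_j^{k−1} = c_i^k/k for 1 ≤ k ≤ η, and B(η): ∑_i b_i c_i^{k−1} = 1/k for 1 ≤ k ≤ η. Then Â satisfies D(η): ∑_i b_i c_i^{k−1} Â_{i,j} = (b_j/k)(1 − c_j^k) for all j and 1 ≤ k ≤ η. -/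
open Matrix

namespace Matrix

variable {n K : Type*} [Fintype n] [DecidableEq n] [Field K]

noncomputable def symplecticConjugate (b : n → K) (A : Matrix n n K) : Matrix n n K :=
  ((of fun _ _ => (1 : K)) - (diagonal b)⁻¹ * Aᵀ) * diagonal b

theorem inv_diagonal_of_ne_zero {b : n → K} (hb : ∀ i, b i ≠ 0) :
    (diagonal b)⁻¹ = diagonal fun i => (b i)⁻¹ :=
  inv_eq_left_inv <| by
    rw [diagonal_mul_diagonal, ← diagonal_one]
    exact congrArg diagonal (funext fun i => inv_mul_cancel₀ (hb i))

theorem symplecticConjugate_apply {b : n → K} (hb : ∀ i, b i ≠ 0) (A : Matrix n n K)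
    (i j : n) : symplecticConjugate b A i j = b j - b j / b i * A j i := by
  simp only [symplecticConjugate, inv_diagonal_of_ne_zero hb, mul_diagonal, sub_apply,
    diagonal_mul, of_apply, transpose_apply]
  ring

/-- Pairing the columns of `Â` with `b ⊙ w` turns `A` into `Aᵀ`: this is how `Â` exchanges
the simplifying conditions `C` and `D`. -/
theorem sum_mul_symplecticConjugate_apply {b : n → K} (hb : ∀ i, b i ≠ 0)
    (A : Matrix n n K) (w : n → K) (j : n) :
    ∑ i, b i * w i * symplecticConjugate b A i j =
      b j * (∑ i, b i * w i - ∑ i, A j i * w i) := by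
  rw [mul_sub, Finset.mul_sum, Finset.mul_sum, ← Finset.sum_sub_distrib]
  refine Finset.sum_congr rfl fun i _ => ?_
  rw [symplecticConjugate_apply hb]
  field_simp [hb i]

end Matrix

/-- The symplectic conjugate of a method satisfying `C(η)` (together with
quadrature order `η`) satisfies the simplifying condition `D(η)`. -/
theorem conjugate_C_implies_D (s η : ℕ)
    (b c : Fin s → ℝ) (hb : ∀ i, b i ≠ 0)
    (A Ahat : Matrix (Fin s) (Fin s) ℝ)
    (hAhat : Ahat =
      ((Matrix.of fun _ _ => (1 : ℝ)) - (Matrix.diagonal b)⁻¹ * Aᵀ) * Matrix.diagonal b)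
    (hC : ∀ (i : Fin s) (k : ℕ), 1 ≤ k → k ≤ η →
      ∑ j, A i j * (c j) ^ (k - 1) = (c i) ^ k / (k : ℝ))
    (hB : ∀ k : ℕ, 1 ≤ k → k ≤ η → ∑ i, b i * (c i) ^ (k - 1) = 1 / (k : ℝ)) :
    ∀ (j : Fin s) (k : ℕ), 1 ≤ k → k ≤ η →
      ∑ i, b i * (c i) ^ (k - 1) * Ahat i j = b j / (k : ℝ) * (1 - (c j) ^ k) := by
  intro j k hk hkη
  change Ahat = symplecticConjugate b A at hAhat
  rw [hAhat, sum_mul_symplecticConjugate_apply hb, hB k hk hkη, hC j k hk hkη]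
  ring
end
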